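/- arXiv:1912.11787 — 4 statements merged into one kernel-verified Lean document; each statement's English description precedes it below -/
import Mathlib

section
/- If f(z) = Σ aₙzⁿ is analytic in the unit disk with |f(z)| ≤ 1 for all |z| < 1, then Σ |aₙ| rⁿ ≤ 1 for all 0 ≤ r ≤ 1/3. -/
/-!
The theorem follows from Wiener's inequality `‖aₙ‖ ≤ 1 - ‖a₀‖²` for `n ≥ 1`: with `t = ‖a₀‖`,
`Σ ‖aₙ‖ rⁿ ≤ t + (1 - t²) r / (1 - r) ≤ t + (1 - t²) / 2 ≤ 1`.
For `n = 1` Wiener's inequality is the Schwarz–Pick inequality at the origin: compose `f` with the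
Blaschke factor `w ↦ (w - a₀) / (1 - conj a₀ w)`, which maps the closed disk into itself and `a₀`
to `0`, and apply the Schwarz lemma (if `‖a₀‖ = 1`, `f` is constant by the maximum modulus
principle). For general `n`, averaging `f` over the rotations `z ↦ ωᵏ z` by the `n`-th roots of
unity keeps only the terms `a_{nm} z^{nm}`, so `w ↦ Σ a_{nm} wᵐ` is again bounded by `1` on the disk
and the case `n = 1` applies to it.
-/

open Metric Set Complex ComplexConjugate FormalMultilinearSeries

noncomputable def blaschkeFactor (b w : ℂ) : ℂ := (w - b) / (1 - conj b * w)

section blaschkeFactor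

variable {b w : ℂ}

theorem normSq_one_sub_conj_mul_sub_normSq_sub (b w : ℂ) :
    normSq (1 - conj b * w) - normSq (w - b) = (1 - normSq w) * (1 - normSq b) := by
  simp only [normSq_apply, sub_re, sub_im, mul_re, mul_im, conj_re, conj_im, one_re, one_im]
  ring

theorem one_sub_conj_mul_ne_zero (hb : ‖b‖ < 1) (hw : ‖w‖ ≤ 1) : 1 - conj b * w ≠ 0 := by
  refine sub_ne_zero.2 fun h => ?_
  have : ‖conj b * w‖ < 1 := by
    rw [norm_mul, RCLike.norm_conj]
    nlinarith [norm_nonneg b, norm_nonneg w]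
  rw [← h, norm_one] at this
  exact this.false

theorem blaschkeFactor_self (b : ℂ) : blaschkeFactor b b = 0 := by
  simp [blaschkeFactor]

theorem norm_blaschkeFactor_le_one (hb : ‖b‖ < 1) (hw : ‖w‖ ≤ 1) :
    ‖blaschkeFactor b w‖ ≤ 1 := by
  have hden := one_sub_conj_mul_ne_zero hb hw
  rw [blaschkeFactor, norm_div, div_le_one (norm_pos_iff.2 hden), ← sq_le_sq₀ (norm_nonneg _)
    (norm_nonneg _), Complex.sq_norm, Complex.sq_norm, ← sub_nonneg,
    normSq_one_sub_conj_mul_sub_normSq_sub, ← Complex.sq_norm, ← Complex.sq_norm]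
  exact mul_nonneg (by nlinarith [norm_nonneg w]) (by nlinarith [norm_nonneg b])

theorem hasDerivAt_blaschkeFactor (hb : ‖b‖ < 1) (hw : ‖w‖ ≤ 1) :
    HasDerivAt (blaschkeFactor b) ((1 - conj b * b) / (1 - conj b * w) ^ 2) w := by
  have hden := one_sub_conj_mul_ne_zero hb hw
  refine (((hasDerivAt_id' w).sub_const b).div
    (((hasDerivAt_id' w).const_mul (conj b)).const_sub 1) hden).congr_deriv ?_
  ring

theorem hasDerivAt_blaschkeFactor_self (hb : ‖b‖ < 1) :
    HasDerivAt (blaschkeFactor b) (((1 - ‖b‖ ^ 2 : ℝ) : ℂ)⁻¹) b := by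
  convert hasDerivAt_blaschkeFactor hb hb.le using 1
  have : (1 : ℂ) - ‖b‖ ^ 2 ≠ 0 := by
    rw [← conj_mul']
    exact one_sub_conj_mul_ne_zero hb hb.le
  rw [conj_mul', sq (1 - _), div_mul_cancel_right₀ this]
  push_cast
  rfl

theorem differentiableAt_blaschkeFactor (hb : ‖b‖ < 1) (hw : ‖w‖ ≤ 1) :
    DifferentiableAt ℂ (blaschkeFactor b) w :=
  (hasDerivAt_blaschkeFactor hb hw).differentiableAt

end blaschkeFactor

theorem norm_deriv_le_one_sub_sq_of_mapsTo_ball {g : ℂ → ℂ}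
    (hd : DifferentiableOn ℂ g (ball 0 1)) (hg : MapsTo g (ball 0 1) (closedBall 0 1)) :
    ‖deriv g 0‖ ≤ 1 - ‖g 0‖ ^ 2 := by
  have hg0 : ‖g 0‖ ≤ 1 := by simpa using hg (mem_ball_self one_pos)
  rcases hg0.lt_or_eq with hlt | heq
  · set h := blaschkeFactor (g 0) ∘ g
    have hmaps : MapsTo h (ball 0 1) (closedBall (h 0) 1) := fun z hz => by
      simpa [h, blaschkeFactor_self] using
        norm_blaschkeFactor_le_one hlt (by simpa using hg hz)
    have hh : HasDerivAt h (((1 - ‖g 0‖ ^ 2 : ℝ) : ℂ)⁻¹ * deriv g 0) 0 :=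
      (hasDerivAt_blaschkeFactor_self hlt).comp 0
        (hd.differentiableAt (ball_mem_nhds 0 one_pos)).hasDerivAt
    have hdh : DifferentiableOn ℂ h (ball 0 1) := fun z hz =>
      ((differentiableAt_blaschkeFactor hlt (by simpa using hg hz)).comp z
        (hd.differentiableAt (isOpen_ball.mem_nhds hz))).differentiableWithinAt
    have hschwarz := norm_deriv_le_one_of_mapsTo_ball hdh hmaps one_pos
    have hpos : 0 < 1 - ‖g 0‖ ^ 2 := by nlinarith [norm_nonneg (g 0)]
    rwa [hh.deriv, norm_mul, norm_inv, norm_real, Real.norm_of_nonneg hpos.le,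
      inv_mul_le_iff₀ hpos, mul_one] at hschwarz
  · have hconst : g =ᶠ[nhds 0] fun _ => g 0 := by
      refine Complex.eventually_eq_of_isLocalMax_norm ?_ ?_
      · filter_upwards [ball_mem_nhds (0 : ℂ) one_pos] with z hz
        exact hd.differentiableAt (isOpen_ball.mem_nhds hz)
      · filter_upwards [ball_mem_nhds (0 : ℂ) one_pos] with z hz
        simpa [heq] using hg hz
    simp [hconst.deriv_eq, heq]

theorem hasFPowerSeriesOnBall_ofScalars_of_hasSum {a : ℕ → ℂ} {f : ℂ → ℂ} {R : NNReal}
    (hR : 0 < R) (hf : ∀ z : ℂ, ‖z‖ < R → HasSum (fun n => a n * z ^ n) (f z)) :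
    HasFPowerSeriesOnBall f (ofScalars ℂ a) 0 R where
  r_le := ENNReal.le_of_forall_nnreal_lt fun r hr => by
    refine le_radius_of_summable_norm _ ?_
    have hr' : ‖((r : ℝ) : ℂ)‖ < R := by simpa using hr
    simpa [ofScalars_norm] using (hf _ hr').summable.norm
  r_pos := by simpa using hR
  hasSum {y} hy := by
    simpa [ofScalars_apply_eq, mul_comm] using hf y (by simpa using hy)

theorem IsPrimitiveRoot.sum_pow_pow_eq {K : Type*} [Field K] {ω : K} {n : ℕ}
    (hω : IsPrimitiveRoot ω n) (j : ℕ) :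
    ∑ k ∈ Finset.range n, (ω ^ k) ^ j = if n ∣ j then (n : K) else 0 := by
  simp_rw [← pow_mul, mul_comm _ j, pow_mul]
  split_ifs with hj
  · simp [(hω.pow_eq_one_iff_dvd j).2 hj]
  · have hpow : (ω ^ j) ^ n = 1 := by rw [← pow_mul, mul_comm, pow_mul, hω.pow_eq_one, one_pow]
    rw [geom_sum_eq (mt (hω.pow_eq_one_iff_dvd j).1 hj), hpow, sub_self, zero_div]

theorem IsPrimitiveRoot.hasSum_sum_comp_mul {a : ℕ → ℂ} {f : ℂ → ℂ} {n : ℕ} {ω z : ℂ}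
    (hn : 0 < n) (hω : IsPrimitiveRoot ω n)
    (hf : ∀ k, HasSum (fun j => a j * (ω ^ k * z) ^ j) (f (ω ^ k * z))) :
    HasSum (fun m => n * (a (n * m) * (z ^ n) ^ m)) (∑ k ∈ Finset.range n, f (ω ^ k * z)) := by
  have hall : HasSum (fun j => a j * z ^ j * ∑ k ∈ Finset.range n, (ω ^ k) ^ j)
      (∑ k ∈ Finset.range n, f (ω ^ k * z)) := by
    refine (hasSum_sum fun k _ => hf k).congr_fun fun j => ?_
    simp only [Finset.mul_sum, mul_pow]
    ring_nf
  simp_rw [hω.sum_pow_pow_eq] at hall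
  refine ((mul_right_injective₀ hn.ne').hasSum_iff fun j hj => ?_).2 hall |>.congr_fun
    fun m => ?_
  · simp only [Set.mem_range, not_exists] at hj
    simp [show ¬ n ∣ j from fun ⟨m, hm⟩ => hj m hm.symm]
  · simp [pow_mul]
    ring

section UnitDisk

variable {a : ℕ → ℂ} {f : ℂ → ℂ}

theorem norm_coeff_one_le_one_sub_sq
    (hf : ∀ z : ℂ, ‖z‖ < 1 → HasSum (fun n => a n * z ^ n) (f z))
    (hb : ∀ z : ℂ, ‖z‖ < 1 → ‖f z‖ ≤ 1) :
    ‖a 1‖ ≤ 1 - ‖a 0‖ ^ 2 := by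
  have hps := hasFPowerSeriesOnBall_ofScalars_of_hasSum one_pos (by simpa using hf)
  have hf0 : f 0 = a 0 := by
    simpa using (hf 0 (by simp)).unique (hasSum_single 0 fun n hn => by simp [hn])
  have hmaps : MapsTo f (ball 0 1) (closedBall 0 1) := fun z hz => by
    simpa using hb z (by simpa using hz)
  have hd : DifferentiableOn ℂ f (ball 0 1) := by
    simpa only [Metric.eball_coe, NNReal.coe_one] using hps.differentiableOn
  have := norm_deriv_le_one_sub_sq_of_mapsTo_ball hd hmaps
  simpa [hps.hasFPowerSeriesAt.deriv, ofScalars_apply_eq, hf0] using this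

theorem exists_hasSum_coeff_nat_mul_norm_le_one
    (hf : ∀ z : ℂ, ‖z‖ < 1 → HasSum (fun n => a n * z ^ n) (f z))
    (hb : ∀ z : ℂ, ‖z‖ < 1 → ‖f z‖ ≤ 1) {n : ℕ} (hn : 0 < n) {w : ℂ} (hw : ‖w‖ < 1) :
    ∃ s, HasSum (fun m => a (n * m) * w ^ m) s ∧ ‖s‖ ≤ 1 := by
  obtain ⟨z, rfl⟩ := IsAlgClosed.exists_pow_nat_eq w hn
  have hz : ‖z‖ < 1 := by
    rwa [norm_pow, pow_lt_one_iff_of_nonneg (norm_nonneg z) hn.ne'] at hw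
  obtain ⟨ω, hω⟩ : ∃ ω : ℂ, IsPrimitiveRoot ω n := ⟨_, Complex.isPrimitiveRoot_exp n hn.ne'⟩
  have hωz : ∀ k, ‖ω ^ k * z‖ < 1 := fun k => by
    rwa [norm_mul, norm_pow, hω.norm'_eq_one hn.ne', one_pow, one_mul]
  refine ⟨(∑ k ∈ Finset.range n, f (ω ^ k * z)) / n, ?_, ?_⟩
  · have hn' : (n : ℂ) ≠ 0 := Nat.cast_ne_zero.2 hn.ne'
    simpa [hn'] using (hω.hasSum_sum_comp_mul hn fun k => hf _ (hωz k)).div_const n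
  · rw [norm_div, norm_natCast, div_le_one (by exact_mod_cast hn)]
    calc _ ≤ ∑ k ∈ Finset.range n, ‖f (ω ^ k * z)‖ := norm_sum_le _ _
      _ ≤ ∑ k ∈ Finset.range n, 1 := Finset.sum_le_sum fun k _ => hb _ (hωz k)
      _ = n := by simp

theorem norm_coeff_le_one_sub_sq
    (hf : ∀ z : ℂ, ‖z‖ < 1 → HasSum (fun n => a n * z ^ n) (f z))
    (hb : ∀ z : ℂ, ‖z‖ < 1 → ‖f z‖ ≤ 1) {n : ℕ} (hn : 0 < n) :
    ‖a n‖ ≤ 1 - ‖a 0‖ ^ 2 := by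
  have hsub := fun w (hw : ‖w‖ < 1) => exists_hasSum_coeff_nat_mul_norm_le_one hf hb hn hw
  simpa using norm_coeff_one_le_one_sub_sq (a := fun m => a (n * m))
    (f := fun w => ∑' m, a (n * m) * w ^ m)
    (fun w hw => by obtain ⟨s, hs, -⟩ := hsub w hw; exact hs.tsum_eq ▸ hs)
    (fun w hw => by obtain ⟨s, hs, hs1⟩ := hsub w hw; exact hs.tsum_eq ▸ hs1)

end UnitDisk

theorem tsum_mul_pow_le_one_of_le_one_sub_sq {c : ℕ → ℝ} {r : ℝ} (hc : ∀ n, 0 ≤ c n)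
    (hcn : ∀ n, 0 < n → c n ≤ 1 - c 0 ^ 2) (hr0 : 0 ≤ r) (hr : r ≤ 1 / 3) :
    ∑' n, c n * r ^ n ≤ 1 := by
  have ht : 0 ≤ 1 - c 0 ^ 2 := (hc 1).trans (hcn 1 one_pos)
  have hr1 : r < 1 := by linarith
  have hgeom := summable_geometric_of_lt_one hr0 hr1
  have hle : ∀ n, c (n + 1) * r ^ (n + 1) ≤ (1 - c 0 ^ 2) * r * r ^ n := fun n => by
    calc _ ≤ (1 - c 0 ^ 2) * r ^ (n + 1) := by gcongr; exact hcn _ n.succ_pos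
      _ = _ := by ring
  have hsumm : Summable fun n => c n * r ^ n := by
    exact (summable_nat_add_iff 1).1 (hgeom.mul_left ((1 - c 0 ^ 2) * r) |>.of_nonneg_of_le
      (fun n => mul_nonneg (hc _) (pow_nonneg hr0 _)) hle)
  have htail : ∑' n, c (n + 1) * r ^ (n + 1) ≤ (1 - c 0 ^ 2) * (r / (1 - r)) := by
    calc _ ≤ ∑' n, (1 - c 0 ^ 2) * r * r ^ n :=
          Summable.tsum_le_tsum hle ((summable_nat_add_iff 1).2 hsumm) (hgeom.mul_left _)
      _ = (1 - c 0 ^ 2) * (r / (1 - r)) := by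
          rw [tsum_mul_left, tsum_geometric_of_lt_one hr0 hr1]
          ring
  have hq : r / (1 - r) ≤ 1 / 2 := by
    rw [div_le_div_iff₀ (by linarith) (by norm_num)]
    linarith
  rw [hsumm.tsum_eq_zero_add, pow_zero, mul_one]
  nlinarith [mul_le_mul_of_nonneg_left hq ht]

/-- Bohr's theorem: if `f(z) = Σ aₙ zⁿ` on the unit disk and `|f| ≤ 1` there,
then `Σ |aₙ| rⁿ ≤ 1` for `0 ≤ r ≤ 1/3`. -/
theorem bohr_theorem (a : ℕ → ℂ) (f : ℂ → ℂ)
    (hf : ∀ z : ℂ, ‖z‖ < 1 → HasSum (fun n => a n * z ^ n) (f z))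
    (hb : ∀ z : ℂ, ‖z‖ < 1 → ‖f z‖ ≤ 1)
    (r : ℝ) (hr0 : 0 ≤ r) (hr : r ≤ 1 / 3) :
    ∑' n : ℕ, ‖a n‖ * r ^ n ≤ 1 :=
  tsum_mul_pow_le_one_of_le_one_sub_sq (fun n => norm_nonneg (a n))
    (fun _ hn => norm_coeff_le_one_sub_sq hf hb hn) hr0 hr
end

section
/- The constant 1/3 in Bohr's theorem is sharp: for every r > 1/3 there exists a function f(z) = Σ aₙzⁿ analytic on the unit disk with |f(z)| ≤ 1 on the disk, such that Σ |aₙ| rⁿ > 1. -/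
/-!
For `0 < a < 1` the Möbius map `f_a z = (a - z) / (1 - a z)` sends the unit disk into itself and
has Taylor coefficients `a, (a² - 1), (a² - 1) a, (a² - 1) a², …`, so its majorant series at `r`
sums to `a + (1 - a²) r / (1 - a r)`, which exceeds `1` by `(1 - a)((2a + 1) r - 1) / (1 - a r)`.
This is positive once `a > (1 - r) / (2r)`, and such an `a < 1` exists exactly when `r > 1/3`.
-/

/-- Taylor coefficients at `0` of the Möbius map `z ↦ (a - z) / (1 - a z)`. -/
def mobiusCoeff (a : ℂ) : ℕ → ℂ
  | 0 => a
  | n + 1 => (a ^ 2 - 1) * a ^ n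

theorem hasSum_mobiusCoeff {a z : ℂ} (haz : ‖a * z‖ < 1) :
    HasSum (fun n => mobiusCoeff a n * z ^ n) ((a - z) / (1 - a * z)) := by
  have hden : 1 - a * z ≠ 0 := fun h => by
    rw [← sub_eq_zero.mp h, norm_one] at haz
    exact lt_irrefl _ haz
  have htail : HasSum (fun n => mobiusCoeff a (n + 1) * z ^ (n + 1))
      ((a ^ 2 - 1) * z * (1 - a * z)⁻¹) := by
    refine ((hasSum_geometric_of_norm_lt_one haz).mul_left ((a ^ 2 - 1) * z)).congr_fun ?_
    intro n
    simp only [mobiusCoeff]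
    ring
  convert htail.zero_add (f := fun n => mobiusCoeff a n * z ^ n) using 1
  simp only [mobiusCoeff, pow_zero, mul_one]
  rw [div_eq_iff hden, add_mul, mul_assoc, inv_mul_cancel₀ hden]
  ring

theorem normSq_one_sub_mul_sub_normSq_sub (a : ℝ) (z : ℂ) :
    Complex.normSq (1 - a * z) - Complex.normSq (a - z) = (1 - a ^ 2) * (1 - Complex.normSq z) := by
  simp only [Complex.normSq_apply, Complex.sub_re, Complex.sub_im, Complex.mul_re,
    Complex.mul_im, Complex.one_re, Complex.one_im, Complex.ofReal_re, Complex.ofReal_im]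
  ring

theorem norm_mobius_le_one {a : ℝ} (ha : |a| ≤ 1) {z : ℂ} (hz : ‖z‖ ≤ 1) :
    ‖(a - z) / (1 - a * z)‖ ≤ 1 := by
  rw [norm_div]
  refine div_le_one_of_le₀ ?_ (norm_nonneg _)
  have hnormSq : Complex.normSq (a - z) ≤ Complex.normSq (1 - a * z) := by
    have h1 : 0 ≤ 1 - a ^ 2 := by nlinarith [abs_nonneg a, sq_abs a]
    have h2 : 0 ≤ 1 - Complex.normSq z := by
      rw [Complex.normSq_eq_norm_sq]; nlinarith [norm_nonneg z]
    linarith [normSq_one_sub_mul_sub_normSq_sub a z, mul_nonneg h1 h2]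
  rw [Complex.normSq_eq_norm_sq, Complex.normSq_eq_norm_sq] at hnormSq
  exact pow_le_pow_iff_left₀ (norm_nonneg _) (norm_nonneg _) two_ne_zero |>.mp hnormSq

theorem hasSum_norm_mobiusCoeff_mul_pow {a r : ℝ} (ha0 : 0 ≤ a) (ha1 : a ≤ 1) (hr : 0 ≤ r)
    (har : a * r < 1) :
    HasSum (fun n => ‖mobiusCoeff a n‖ * r ^ n) (a + (1 - a ^ 2) * r / (1 - a * r)) := by
  have hcoeff : ‖(a : ℂ) ^ 2 - 1‖ = 1 - a ^ 2 := by
    rw [← norm_neg, neg_sub, ← Complex.ofReal_pow, ← Complex.ofReal_one, ← Complex.ofReal_sub,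
      Complex.norm_real, Real.norm_of_nonneg (by nlinarith)]
  have htail : HasSum (fun n => ‖mobiusCoeff a (n + 1)‖ * r ^ (n + 1))
      ((1 - a ^ 2) * r * (1 - a * r)⁻¹) := by
    refine ((hasSum_geometric_of_lt_one (by positivity) har).mul_left
      ((1 - a ^ 2) * r)).congr_fun ?_
    intro n
    simp only [mobiusCoeff, norm_mul, norm_pow, hcoeff, Complex.norm_real,
      Real.norm_of_nonneg ha0]
    ring
  convert htail.zero_add (f := fun n => ‖mobiusCoeff a n‖ * r ^ n) using 1
  simp only [mobiusCoeff, Complex.norm_real, Real.norm_of_nonneg ha0, pow_zero, mul_one,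
    div_eq_mul_inv]

theorem one_lt_mobius_majorant {a r : ℝ} (ha1 : a < 1) (har : a * r < 1)
    (h : 1 < (2 * a + 1) * r) : 1 < a + (1 - a ^ 2) * r / (1 - a * r) := by
  have hpos : 0 < 1 - a * r := by linarith
  rw [← sub_pos, show a + (1 - a ^ 2) * r / (1 - a * r) - 1
      = (1 - a) * ((2 * a + 1) * r - 1) / (1 - a * r) by field_simp; ring]
  exact div_pos (mul_pos (by linarith) (by linarith)) hpos

/-- Sharpness of the Bohr radius `1/3`: for every `1/3 < r < 1` there is an
analytic `f` on the unit disk, bounded by `1`, with majorant exceeding `1` at `r`. -/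
theorem bohr_radius_sharp (r : ℝ) (hr : 1 / 3 < r) (hr1 : r < 1) :
    ∃ (a : ℕ → ℂ) (f : ℂ → ℂ),
      (∀ z : ℂ, ‖z‖ < 1 → HasSum (fun n => a n * z ^ n) (f z)) ∧
      (∀ z : ℂ, ‖z‖ < 1 → ‖f z‖ ≤ 1) ∧
      1 < ∑' n : ℕ, ‖a n‖ * r ^ n := by
  -- any `a ∈ ((1 - r) / (2r), 1)` works; this is the midpoint
  set a : ℝ := (1 + r) / (4 * r) with ha
  have hr0 : 0 < r := by linarith
  have ha0 : 0 < a := by positivity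
  have ha1 : a < 1 := by rw [ha, div_lt_one (by positivity)]; linarith
  have har : a * r < 1 := by nlinarith
  have hcrit : 1 < (2 * a + 1) * r := by
    rw [ha]; field_simp; linarith
  refine ⟨mobiusCoeff a, fun z => (a - z) / (1 - a * z), fun z hz => ?_, fun z hz => ?_, ?_⟩
  · refine hasSum_mobiusCoeff ?_
    rw [norm_mul, Complex.norm_real, Real.norm_of_nonneg ha0.le]
    nlinarith [norm_nonneg z]
  · exact norm_mobius_le_one (abs_le.mpr ⟨by linarith, ha1.le⟩) hz.le
  · rw [(hasSum_norm_mobiusCoeff_mul_pow ha0.le ha1.le hr0.le har).tsum_eq]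
    exact one_lt_mobius_majorant ha1 har hcrit
end

section
/- If f(z) = Σ aₙzⁿ is analytic in the unit disk with |f(z)| ≤ 1 on the disk, then for every k ≥ 0 and every z with |z| ≤ 1/2, the k-th partial sum satisfies |Σ_{n=0}^{k} aₙ zⁿ| ≤ 1. -/
/-!
Fix `0 < r < 1`, `‖w‖ ≤ 1/2` and put `u = w e^{-iθ}`. The kernel `P(θ) = 2 Re (1 + u + ⋯ + u^k) - 1`
is a trigonometric polynomial whose `n`-th Fourier coefficient is `w^n` for `0 ≤ n ≤ k` and `0` for
`n > k`, so integrating it against `f(r e^{iθ})` returns `2π Σ_{n ≤ k} aₙ (r w)ⁿ`. For `‖u‖ ≤ 1/2`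
the kernel is nonnegative with mean `1`, so this partial sum is bounded by `sup |f| ≤ 1`.
Letting `r → 1` gives the bound at `w`.
-/

open Complex Finset Filter Topology MeasureTheory
open scoped Real ComplexConjugate

theorem integral_exp_int_mul_I (j : ℤ) :
    ∫ θ in (0 : ℝ)..2 * π, exp (j * θ * I) = if j = 0 then (2 * π : ℂ) else 0 := by
  split_ifs with hj
  · simp [hj]
  · simp_rw [mul_right_comm _ _ I]
    rw [integral_exp_mul_complex (by simp [hj])]
    have hperiod : (j : ℂ) * I * (2 * π) = j * (2 * π * I) := by ring
    simp [hperiod, exp_int_mul_two_pi_mul_I]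

theorem summable_norm_mul_pow_of_summable {a : ℕ → ℂ} {R : ℝ}
    (ha : ∀ z : ℂ, ‖z‖ < R → Summable fun n => a n * z ^ n) {r : ℝ} (hr₀ : 0 ≤ r) (hr : r < R) :
    Summable fun n => ‖a n‖ * r ^ n := by
  obtain ⟨s, hrs, hsR⟩ := exists_between hr
  lift s to NNReal using hr₀.trans hrs.le
  lift r to NNReal using hr₀
  set p := FormalMultilinearSeries.ofScalars ℂ a
  have hs : (s : ENNReal) ≤ p.radius := by
    refine p.le_radius_of_tendsto (l := 0) ?_
    simpa [p, FormalMultilinearSeries.ofScalars_norm] using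
      (ha s (by simpa using hsR)).tendsto_atTop_zero.norm
  simpa [p, FormalMultilinearSeries.ofScalars_norm] using
    p.summable_norm_mul_pow (lt_of_lt_of_le (by exact_mod_cast hrs) hs)

theorem hasSum_integral_mul_of_hasSum_circleMap {a : ℕ → ℂ} {g h : ℝ → ℂ} {r α β : ℝ}
    (hr : 0 ≤ r) (ha : Summable fun n => ‖a n‖ * r ^ n)
    (hg : ∀ θ, HasSum (fun n => a n * circleMap 0 r θ ^ n) (g θ))
    (hh : IntervalIntegrable h volume α β) :
    HasSum (fun n => a n * r ^ n * ∫ θ in α..β, exp (n * θ * I) * h θ)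
      (∫ θ in α..β, g θ * h θ) := by
  have hterm : ∀ (n : ℕ) θ,
      a n * circleMap 0 r θ ^ n * h θ = a n * r ^ n * (exp (n * θ * I) * h θ) := fun n θ => by
    rw [circleMap_zero, mul_pow, ← exp_nat_mul]
    ring_nf
  simp_rw [← intervalIntegral.integral_const_mul, ← hterm]
  refine intervalIntegral.hasSum_integral_of_dominated_convergence
    (fun n θ => ‖a n‖ * r ^ n * ‖h θ‖) (fun n => ?_) (fun n => ?_) ?_ ?_ ?_
  · exact ((continuous_const.mul ((continuous_circleMap 0 r).pow n)).aestronglyMeasurable).mul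
      hh.def'.aestronglyMeasurable
  · refine ae_of_all _ fun θ _ => ?_
    simp [norm_circleMap_zero, abs_of_nonneg hr]
  · exact ae_of_all _ fun θ _ => ha.mul_right _
  · simp_rw [tsum_mul_right]
    exact hh.norm.const_mul _
  · exact ae_of_all _ fun θ _ => (hg θ).mul_right (h θ)

theorem one_le_two_mul_re_geom_sum {u : ℂ} (hu : ‖u‖ ≤ 1 / 2) (k : ℕ) :
    1 ≤ 2 * (∑ m ∈ range (k + 1), u ^ m).re := by
  rcases k.eq_zero_or_pos with rfl | hk
  · norm_num
  set q := 2 * ∑ m ∈ range (k + 1), u ^ m - 1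
  have hq : q * (1 - u) = 1 + u - 2 * u ^ (k + 1) := by
    linear_combination 2 * geom_sum_mul_neg u (k + 1)
  have hre : q.re * normSq (1 - u) = 1 - ‖u‖ ^ 2 - 2 * (u ^ (k + 1) * conj (1 - u)).re :=
    calc q.re * normSq (1 - u) = (q * ((1 - u) * conj (1 - u))).re := by
          rw [mul_conj, re_mul_ofReal]
      _ = ((1 + u - 2 * u ^ (k + 1)) * conj (1 - u)).re := by rw [← mul_assoc, hq]
      _ = 1 - ‖u‖ ^ 2 - 2 * (u ^ (k + 1) * conj (1 - u)).re := by
          simp only [map_sub, map_one, sub_mul, add_mul, one_mul, sub_re, add_re, one_re, conj_re,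
            mul_re, sub_im, one_im, conj_im, re_ofNat, im_ofNat, zero_mul, sub_zero, mul_im,
            ← normSq_eq_norm_sq, normSq_apply]
          ring
  have htail : (u ^ (k + 1) * conj (1 - u)).re ≤ ‖u‖ ^ 2 * (1 + ‖u‖) := by
    refine (re_le_norm _).trans ?_
    rw [norm_mul, norm_pow, RCLike.norm_conj]
    refine mul_le_mul ?_ ((norm_sub_le 1 u).trans (by simp)) (norm_nonneg _) (by positivity)
    exact pow_le_pow_of_le_one (norm_nonneg u) (hu.trans (by norm_num)) (by omega)
  have hN : 0 < normSq (1 - u) := normSq_pos.mpr (sub_ne_zero.mpr fun h => by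
    norm_num [← h] at hu)
  -- with `t = ‖u‖ ≤ 1/2`: `1 - t² - 2t²(1 + t) = (1 + t)²(1 - 2t) ≥ 0`
  have hprod : 0 ≤ q.re * normSq (1 - u) := by
    nlinarith [norm_nonneg u]
  have hqre : q.re = 2 * (∑ m ∈ range (k + 1), u ^ m).re - 1 := by simp [q, -re_sum]
  linarith [nonneg_of_mul_nonneg_left hprod hN]

noncomputable def rogosinskiKernel (w : ℂ) (k : ℕ) (θ : ℝ) : ℝ :=
  2 * (∑ m ∈ range (k + 1), w ^ m * exp (-(m * θ * I))).re - 1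

theorem rogosinskiKernel_nonneg {w : ℂ} (hw : ‖w‖ ≤ 1 / 2) (k : ℕ) (θ : ℝ) :
    0 ≤ rogosinskiKernel w k θ := by
  have hterm : ∀ m : ℕ, w ^ m * exp (-(m * θ * I)) = (w * exp (-(θ * I))) ^ m := fun m => by
    rw [mul_pow, ← exp_nat_mul]
    ring_nf
  have hnorm : ‖w * exp (-(θ * I))‖ ≤ 1 / 2 := by simpa [norm_exp] using hw
  simpa [rogosinskiKernel, hterm] using one_le_two_mul_re_geom_sum hnorm k

theorem ofReal_rogosinskiKernel (w : ℂ) (k : ℕ) (θ : ℝ) :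
    (rogosinskiKernel w k θ : ℂ) = ∑ m ∈ range (k + 1),
      (w ^ m * exp (-(m * θ * I)) + conj w ^ m * exp (m * θ * I)) - 1 := by
  have hconj : ∀ m : ℕ, conj (w ^ m * exp (-(m * θ * I))) = conj w ^ m * exp (m * θ * I) :=
    fun m => by simp [← exp_conj]
  rw [rogosinskiKernel, sum_add_distrib, ← funext hconj, ← map_sum, add_conj]
  push_cast
  ring

theorem continuous_rogosinskiKernel (w : ℂ) (k : ℕ) : Continuous (rogosinskiKernel w k) := by
  unfold rogosinskiKernel
  fun_prop

theorem integral_exp_mul_rogosinskiKernel (w : ℂ) (k n : ℕ) :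
    ∫ θ in (0 : ℝ)..2 * π, exp (n * θ * I) * rogosinskiKernel w k θ =
      if n ≤ k then 2 * π * w ^ n else 0 := by
  have hexp : ∀ θ : ℝ, exp (n * θ * I) * rogosinskiKernel w k θ = ∑ m ∈ range (k + 1),
      (w ^ m * exp (((n - m : ℤ) : ℂ) * θ * I) + conj w ^ m * exp (((n + m : ℕ) : ℤ) * θ * I))
        - exp (((n : ℤ) : ℂ) * θ * I) := fun θ => by
    rw [ofReal_rogosinskiKernel, mul_sub, mul_one, mul_sum]
    congr 1
    refine sum_congr rfl fun m _ => ?_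
    rw [mul_add, mul_left_comm, ← exp_add, mul_left_comm, ← exp_add]
    push_cast
    ring_nf
  have hint : ∀ j : ℤ, IntervalIntegrable (fun θ : ℝ => exp (j * θ * I)) volume 0 (2 * π) :=
    fun j => Continuous.intervalIntegrable (by fun_prop) _ _
  simp_rw [hexp]
  rw [intervalIntegral.integral_sub (Continuous.intervalIntegrable (by fun_prop) _ _) (hint _),
    intervalIntegral.integral_finsetSum fun m _ =>
      ((hint _).const_mul _).add ((hint _).const_mul _)]
  simp only [intervalIntegral.integral_add ((hint _).const_mul _) ((hint _).const_mul _),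
    intervalIntegral.integral_const_mul, integral_exp_int_mul_I]
  have hdiag : ∀ m : ℕ, ((n : ℤ) - m = 0) ↔ m = n := by omega
  simp only [hdiag, Nat.cast_eq_zero, Nat.add_eq_zero_iff, mul_ite, mul_zero, sum_add_distrib,
    sum_ite_eq', mem_range, Nat.lt_succ_iff]
  by_cases hn : n = 0
  · subst hn
    simp
  · simp [hn, mul_comm]

theorem integral_rogosinskiKernel (w : ℂ) (k : ℕ) :
    ∫ θ in (0 : ℝ)..2 * π, rogosinskiKernel w k θ = 2 * π := by
  have h₀ := integral_exp_mul_rogosinskiKernel w k 0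
  simp only [CharP.cast_eq_zero, zero_mul, exp_zero, one_mul, intervalIntegral.integral_ofReal,
    zero_le, if_true, pow_zero, mul_one] at h₀
  exact_mod_cast h₀

theorem norm_sum_range_mul_pow_le_one_of_circle {a : ℕ → ℂ} {g : ℝ → ℂ} {r : ℝ} (hr : 0 ≤ r)
    (ha : Summable fun n => ‖a n‖ * r ^ n)
    (hg : ∀ θ, HasSum (fun n => a n * circleMap 0 r θ ^ n) (g θ)) (hg₁ : ∀ θ, ‖g θ‖ ≤ 1)
    {w : ℂ} (hw : ‖w‖ ≤ 1 / 2) (k : ℕ) :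
    ‖∑ n ∈ range (k + 1), a n * (r * w) ^ n‖ ≤ 1 := by
  have hP := continuous_rogosinskiKernel w k
  have hP₀ := rogosinskiKernel_nonneg hw k
  have hsum := hasSum_integral_mul_of_hasSum_circleMap hr ha hg
    ((continuous_ofReal.comp hP).intervalIntegrable 0 (2 * π))
  simp only [Function.comp_apply, integral_exp_mul_rogosinskiKernel] at hsum
  have hgP : ∫ θ in (0 : ℝ)..2 * π, g θ * rogosinskiKernel w k θ =
      2 * π * ∑ n ∈ range (k + 1), a n * (r * w) ^ n := by
    refine hsum.unique ?_
    have hterm : ∀ n ∈ range (k + 1), 2 * π * (a n * (r * w) ^ n) =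
        a n * r ^ n * if n ≤ k then 2 * π * w ^ n else 0 := fun n hn => by
      rw [if_pos (Nat.lt_succ_iff.mp (mem_range.mp hn)), mul_pow]
      ring
    rw [mul_sum, sum_congr rfl hterm]
    exact hasSum_sum_of_ne_finset_zero fun n hn => by
      rw [if_neg (by simpa [Nat.lt_succ_iff] using hn), mul_zero]
  have hbound : ‖∫ θ in (0 : ℝ)..2 * π, g θ * rogosinskiKernel w k θ‖ ≤
      ∫ θ in (0 : ℝ)..2 * π, rogosinskiKernel w k θ := by
    refine intervalIntegral.norm_integral_le_of_norm_le (by positivity)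
      (ae_of_all _ fun θ _ => ?_) (hP.intervalIntegrable _ _)
    rw [norm_mul, norm_real, Real.norm_of_nonneg (hP₀ θ)]
    exact mul_le_of_le_one_left (hP₀ θ) (hg₁ θ)
  rw [hgP, integral_rogosinskiKernel, norm_mul, norm_mul, norm_ofNat, norm_real,
    Real.norm_of_nonneg Real.pi_pos.le] at hbound
  exact le_of_mul_le_mul_left (by linarith) (by positivity : 0 < 2 * π)

/-- Rogosinski's theorem: if `f(z) = Σ aₙ zⁿ` with `|f| ≤ 1` on the unit disk,
then every partial sum is bounded by `1` for `|z| ≤ 1/2`. -/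
theorem rogosinski_theorem (a : ℕ → ℂ) (f : ℂ → ℂ)
    (hf : ∀ z : ℂ, ‖z‖ < 1 → HasSum (fun n => a n * z ^ n) (f z))
    (hb : ∀ z : ℂ, ‖z‖ < 1 → ‖f z‖ ≤ 1)
    (k : ℕ) (z : ℂ) (hz : ‖z‖ ≤ 1 / 2) :
    ‖∑ n ∈ Finset.range (k + 1), a n * z ^ n‖ ≤ 1 := by
  have hdilate : ∀ r ∈ Set.Ioo (0 : ℝ) 1, ‖∑ n ∈ range (k + 1), a n * (r * z) ^ n‖ ≤ 1 := by
    intro r ⟨hr₀, hr₁⟩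
    have hcirc : ∀ θ, ‖circleMap 0 r θ‖ < 1 := fun θ => by
      rwa [norm_circleMap_zero, abs_of_pos hr₀]
    exact norm_sum_range_mul_pow_le_one_of_circle hr₀.le
      (summable_norm_mul_pow_of_summable (fun w hw => (hf w hw).summable) hr₀.le hr₁)
      (fun θ => hf _ (hcirc θ)) (fun θ => hb _ (hcirc θ)) hz k
  have hlim : Tendsto (fun r : ℝ => ‖∑ n ∈ range (k + 1), a n * (r * z) ^ n‖) (𝓝[<] 1)
      (𝓝 ‖∑ n ∈ range (k + 1), a n * z ^ n‖) := by
    have hcont : Continuous fun r : ℝ => ‖∑ n ∈ range (k + 1), a n * (r * z) ^ n‖ := by fun_prop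
    simpa using (hcont.continuousWithinAt (s := Set.Iio 1) (x := 1)).tendsto
  exact le_of_tendsto hlim (eventually_of_mem (Ioo_mem_nhdsLT zero_lt_one) hdilate)
end

section
/- If f(z) = Σ aₙzⁿ is subordinate to h(z) = Σ bₙzⁿ in the unit disk, then for every k ≥ 0, Σ_{n=0}^k |aₙ| rⁿ ≤ Σ_{n=0}^k |bₙ| rⁿ for all 0 ≤ r ≤ 1/3. -/
/-!
Write `φ = z ψ` with `‖ψ‖ ≤ 1` (Schwarz lemma). Splitting `h` after its `k`-th term,
`f = h ∘ φ = ∑_{n ≤ k} bₙ zⁿ ψⁿ + z^(k+1) G` with `G` holomorphic, so comparing coefficients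
gives `aᵢ = ∑_{n ≤ k} bₙ [zⁱ](zⁿ ψⁿ)` for `i ≤ k`. Hence it suffices that
`∑_i ‖[zⁱ](zⁿ ψⁿ)‖ rⁱ ≤ rⁿ`, which is Bohr's inequality `∑ ‖cⱼ‖ rʲ ≤ 1` (`r ≤ 1/3`) for the
bounded function `ψⁿ`. Bohr's inequality follows from Wiener's bound `‖cₘ‖ ≤ 1 - ‖c₀‖²`, the
Schwarz–Pick estimate at `0` for the symmetrisation `G (z ^ m) = m⁻¹ ∑ⱼ u (ωʲ z)` over the
`m`-th roots of unity, whose power series is `∑ₗ c_{lm} wˡ`.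
-/

open Metric Filter Set Finset ComplexConjugate
open scoped Topology NNReal

namespace Complex

theorem norm_sub_le_norm_one_sub_conj_mul {x y : ℂ} (hx : ‖x‖ ≤ 1) (hy : ‖y‖ ≤ 1) :
    ‖x - y‖ ≤ ‖1 - conj y * x‖ := by
  have hid : ‖1 - conj y * x‖ ^ 2 = ‖x - y‖ ^ 2 + (1 - ‖x‖ ^ 2) * (1 - ‖y‖ ^ 2) := by
    simp only [← normSq_eq_norm_sq, normSq_apply, sub_re, sub_im, mul_re, mul_im, conj_re,
      conj_im, one_re, one_im]
    ring
  have hprod : 0 ≤ (1 - ‖x‖ ^ 2) * (1 - ‖y‖ ^ 2) :=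
    mul_nonneg (by nlinarith [norm_nonneg x]) (by nlinarith [norm_nonneg y])
  exact pow_le_pow_iff_left₀ (norm_nonneg _) (norm_nonneg _) two_ne_zero |>.mp (by linarith)

variable {G : ℂ → ℂ}

theorem norm_deriv_le_one_sub_sq_of_norm_lt_one (hd : DifferentiableOn ℂ G (ball 0 1))
    (hb : MapsTo G (ball 0 1) (closedBall 0 1)) (h0 : ‖G 0‖ < 1) :
    ‖deriv G 0‖ ≤ 1 - ‖G 0‖ ^ 2 := by
  set a := G 0 with ha
  have hden : ∀ w ∈ ball (0 : ℂ) 1, 1 - conj a * G w ≠ 0 := by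
    intro w hw
    refine sub_ne_zero.mpr fun h => ?_
    have hnorm := congrArg norm h
    rw [norm_one, norm_mul, norm_conj] at hnorm
    nlinarith [norm_nonneg a, mem_closedBall_zero_iff.mp (hb hw), norm_nonneg (G w)]
  set F : ℂ → ℂ := fun w => (G w - a) / (1 - conj a * G w)
  have hFd : DifferentiableOn ℂ F (ball 0 1) :=
    (hd.sub_const a).div ((differentiableOn_const 1).sub (hd.const_mul _)) hden
  have hFmaps : MapsTo F (ball 0 1) (closedBall (F 0) 1) := by
    intro w hw
    have hw' := mem_closedBall_zero_iff.mp (hb hw)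
    rw [show F 0 = 0 by simp [F, ← ha], mem_closedBall_zero_iff, norm_div]
    exact div_le_one_of_le₀ (norm_sub_le_norm_one_sub_conj_mul hw' h0.le) (norm_nonneg _)
  have hG := (hd.differentiableAt (ball_mem_nhds 0 one_pos)).hasDerivAt
  have hF : HasDerivAt F (deriv G 0 / (1 - conj a * a)) 0 := by
    have hD0 : 1 - conj a * a ≠ 0 := hden 0 (mem_ball_self one_pos)
    refine ((hG.sub_const a).div ((hasDerivAt_const 0 1).sub (hG.const_mul (conj a))) hD0)
      |>.congr_deriv ?_
    simp only [Pi.sub_apply, ← ha, sub_self, zero_mul, sub_zero]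
    field_simp
  have hnorm : ‖1 - conj a * a‖ = 1 - ‖a‖ ^ 2 := by
    rw [mul_comm, mul_conj, normSq_eq_norm_sq, ← ofReal_one, ← ofReal_sub, norm_real,
      Real.norm_of_nonneg (by nlinarith [norm_nonneg a])]
  have hpos : 0 < 1 - ‖a‖ ^ 2 := by nlinarith [norm_nonneg a]
  have hschwarz := norm_deriv_le_one_of_mapsTo_ball hFd hFmaps one_pos
  rwa [hF.deriv, norm_div, hnorm, div_le_one hpos] at hschwarz

theorem norm_deriv_le_one_sub_sq (hd : DifferentiableOn ℂ G (ball 0 1))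
    (hb : MapsTo G (ball 0 1) (closedBall 0 1)) :
    ‖deriv G 0‖ ≤ 1 - ‖G 0‖ ^ 2 := by
  rcases (mem_closedBall_zero_iff.mp (hb (mem_ball_self one_pos))).lt_or_eq with h0 | h0
  · exact norm_deriv_le_one_sub_sq_of_norm_lt_one hd hb h0
  · have hmax : IsMaxOn (norm ∘ G) (ball 0 1) 0 := fun w hw =>
      by simpa [h0] using mem_closedBall_zero_iff.mp (hb hw)
    have hconst := eqOn_of_isPreconnected_of_isMaxOn_norm (convex_ball 0 1).isPreconnected
      isOpen_ball hd (mem_ball_self one_pos) hmax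
    rw [(eventuallyEq_of_mem (ball_mem_nhds 0 one_pos) hconst).deriv_eq, h0,
      show deriv (Function.const ℂ (G 0)) 0 = 0 from deriv_const 0 (G 0)]
    norm_num

theorem exists_eq_mul_of_map_zero {φ : ℂ → ℂ} (hd : DifferentiableOn ℂ φ (ball 0 1))
    (h0 : φ 0 = 0) (hb : ∀ z : ℂ, ‖z‖ < 1 → ‖φ z‖ ≤ 1) :
    ∃ ψ : ℂ → ℂ, DifferentiableOn ℂ ψ (ball 0 1) ∧ (∀ z : ℂ, ‖z‖ < 1 → ‖ψ z‖ ≤ 1) ∧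
      ∀ z, φ z = z * ψ z := by
  have hmaps : MapsTo φ (ball 0 1) (closedBall (φ 0) 1) := fun z hz => by
    simpa [h0] using hb z (mem_ball_zero_iff.mp hz)
  refine ⟨dslope φ 0, (differentiableOn_dslope (ball_mem_nhds 0 one_pos)).mpr hd,
    fun z hz => ?_, fun z => ?_⟩
  · simpa using norm_dslope_le_div_of_mapsTo_ball hd hmaps (mem_ball_zero_iff.mpr hz)
  · simpa [h0] using (sub_smul_dslope φ 0 z).symm

end Complex

theorem IsPrimitiveRoot.sum_pow_pow_eq_ite {R : Type*} [CommRing R] [IsDomain R] {ω : R} {m : ℕ}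
    (hω : IsPrimitiveRoot ω m) (n : ℕ) :
    ∑ j ∈ range m, (ω ^ j) ^ n = if m ∣ n then (m : R) else 0 := by
  simp_rw [← pow_mul, mul_comm _ n, pow_mul]
  split_ifs with hdvd
  · simp [(hω.pow_eq_one_iff_dvd n).mpr hdvd]
  · have hne : ω ^ n - 1 ≠ 0 := sub_ne_zero.mpr fun h => hdvd ((hω.pow_eq_one_iff_dvd n).mp h)
    have hgeom := geom_sum_mul (ω ^ n) m
    rw [← pow_mul, mul_comm n m, pow_mul, hω.pow_eq_one, one_pow, sub_self] at hgeom
    exact (mul_eq_zero.mp hgeom).resolve_right hne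

def HasPowerSeriesOnUnitDisc (c : ℕ → ℂ) (u : ℂ → ℂ) : Prop :=
  ∀ z : ℂ, ‖z‖ < 1 → HasSum (fun n => c n * z ^ n) (u z)

noncomputable def taylorCoeff (u : ℂ → ℂ) (n : ℕ) : ℂ := (n.factorial : ℂ)⁻¹ * iteratedDeriv n u 0

def shiftCoeff (m : ℕ) (c : ℕ → ℂ) (i : ℕ) : ℂ := if m ≤ i then c (i - m) else 0

theorem DifferentiableOn.hasPowerSeriesOnUnitDisc {u : ℂ → ℂ}
    (hu : DifferentiableOn ℂ u (ball 0 1)) : HasPowerSeriesOnUnitDisc (taylorCoeff u) u :=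
  fun z hz => by
    simpa [taylorCoeff, mul_comm, mul_left_comm] using
      Complex.hasSum_taylorSeries_on_ball hu (mem_ball_zero_iff.mpr hz)

theorem sum_range_norm_shiftCoeff_mul_pow (m N : ℕ) (c : ℕ → ℂ) (r : ℝ) :
    ∑ i ∈ range N, ‖shiftCoeff m c i‖ * r ^ i = r ^ m * ∑ j ∈ range (N - m), ‖c j‖ * r ^ j := by
  rcases le_or_gt m N with hmN | hNm
  · obtain ⟨n, rfl⟩ := Nat.exists_eq_add_of_le hmN
    rw [sum_range_add, Nat.add_sub_cancel_left, mul_sum,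
      sum_eq_zero fun i hi => by simp [shiftCoeff, (mem_range.mp hi).not_ge], zero_add]
    simp [shiftCoeff, pow_add, mul_left_comm]
  · rw [Nat.sub_eq_zero_of_le hNm.le, Finset.range_zero, sum_empty, mul_zero]
    exact sum_eq_zero fun i hi => by
      simp [shiftCoeff, (mem_range.mp hi).trans hNm |>.not_ge]

theorem eball_zero_one : eball (0 : ℂ) 1 = ball 0 1 := by
  simpa using eball_coe (x := (0 : ℂ)) (ε := 1)

namespace HasPowerSeriesOnUnitDisc

variable {c c' : ℕ → ℂ} {u : ℂ → ℂ}

theorem hasFPowerSeriesOnBall (hu : HasPowerSeriesOnUnitDisc c u) :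
    HasFPowerSeriesOnBall u (FormalMultilinearSeries.ofScalars ℂ c) 0 1 where
  r_le := by
    refine ENNReal.le_of_forall_nnreal_lt fun ρ hρ => ?_
    have hρ1 : ‖((ρ : ℝ) : ℂ)‖ < 1 := by simpa using hρ
    refine FormalMultilinearSeries.le_radius_of_tendsto _ (l := 0) ?_
    simpa [FormalMultilinearSeries.ofScalars_norm] using
      (hu _ hρ1).summable.tendsto_atTop_zero.norm
  r_pos := one_pos
  hasSum {y} hy := by
    rw [eball_zero_one, mem_ball_zero_iff] at hy
    simpa [FormalMultilinearSeries.ofScalars_apply_eq, mul_comm] using hu y hy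

theorem differentiableOn (hu : HasPowerSeriesOnUnitDisc c u) :
    DifferentiableOn ℂ u (ball 0 1) :=
  eball_zero_one ▸ hu.hasFPowerSeriesOnBall.differentiableOn

theorem unique (hu : HasPowerSeriesOnUnitDisc c u) (hu' : HasPowerSeriesOnUnitDisc c' u) :
    c = c' :=
  FormalMultilinearSeries.ofScalars_series_injective ℂ ℂ <|
    hu.hasFPowerSeriesOnBall.hasFPowerSeriesAt.eq_formalMultilinearSeries
      hu'.hasFPowerSeriesOnBall.hasFPowerSeriesAt

theorem apply_zero (hu : HasPowerSeriesOnUnitDisc c u) : u 0 = c 0 :=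
  (hu 0 (by simp)).unique <| by
    simpa using hasSum_single (f := fun n => c n * (0 : ℂ) ^ n) 0 fun n hn => by simp [hn]

theorem deriv_zero (hu : HasPowerSeriesOnUnitDisc c u) : deriv u 0 = c 1 := by
  simp [hu.hasFPowerSeriesOnBall.hasFPowerSeriesAt.deriv]

theorem id_pow_mul (hu : HasPowerSeriesOnUnitDisc c u) (m : ℕ) :
    HasPowerSeriesOnUnitDisc (shiftCoeff m c) (fun z => z ^ m * u z) := fun z hz => by
  refine (hasSum_nat_add_iff' m).mp ?_
  rw [sum_eq_zero fun i hi => by simp [shiftCoeff, (mem_range.mp hi).not_ge], sub_zero]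
  simpa [shiftCoeff, pow_add, mul_comm, mul_left_comm] using (hu z hz).mul_left (z ^ m)

theorem exists_eq_sum_add_pow_mul (hu : HasPowerSeriesOnUnitDisc c u) (m : ℕ) :
    ∃ g, HasPowerSeriesOnUnitDisc (fun j => c (j + m)) g ∧
      ∀ z, ‖z‖ < 1 → u z = ∑ n ∈ range m, c n * z ^ n + z ^ m * g z := by
  have hsummable : ∀ z : ℂ, ‖z‖ < 1 → Summable fun j => c (j + m) * z ^ j := by
    intro z hz
    rcases eq_or_ne z 0 with rfl | hz0
    · exact (hasSum_single 0 fun j hj => by simp [hj]).summable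
    · refine (((summable_nat_add_iff m).mpr (hu z hz).summable).mul_right (z ^ m)⁻¹).congr
        fun j => ?_
      field_simp
      ring
  refine ⟨fun z => ∑' j, c (j + m) * z ^ j, fun z hz => (hsummable z hz).hasSum, fun z hz => ?_⟩
  have htail := (hasSum_nat_add_iff' m).mpr (hu z hz)
  have heq := htail.unique (((hsummable z hz).hasSum.mul_left (z ^ m)).congr_fun fun j => by ring)
  exact sub_eq_iff_eq_add'.mp heq

theorem exists_coeff_mul_norm_le (hu : HasPowerSeriesOnUnitDisc c u) {C : ℝ}
    (hb : ∀ z : ℂ, ‖z‖ < 1 → ‖u z‖ ≤ C) {m : ℕ} (hm : m ≠ 0) :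
    ∃ G, HasPowerSeriesOnUnitDisc (fun l => c (l * m)) G ∧ ∀ w : ℂ, ‖w‖ < 1 → ‖G w‖ ≤ C := by
  set ω := Complex.exp (2 * Real.pi * Complex.I / m)
  have hω : IsPrimitiveRoot ω m := Complex.isPrimitiveRoot_exp m hm
  have hrot : ∀ j : ℕ, ∀ z : ℂ, ‖z‖ < 1 → ‖ω ^ j * z‖ < 1 := fun j z hz => by
    rwa [norm_mul, norm_pow, hω.norm'_eq_one hm, one_pow, one_mul]
  have hroot : ∀ w : ℂ, ‖w‖ < 1 → ‖w ^ (m⁻¹ : ℂ)‖ < 1 := fun w hw => by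
    refine (pow_lt_one_iff_of_nonneg (norm_nonneg _) hm).mp ?_
    rwa [← norm_pow, Complex.cpow_nat_inv_pow w hm]
  refine ⟨fun w => (m : ℂ)⁻¹ * ∑ j ∈ range m, u (ω ^ j * w ^ (m⁻¹ : ℂ)), fun w hw => ?_,
    fun w hw => ?_⟩
  · set z := w ^ (m⁻¹ : ℂ)
    have hfilter : HasSum (fun n => if m ∣ n then (m : ℂ) * (c n * z ^ n) else 0)
        (∑ j ∈ range m, u (ω ^ j * z)) := by
      refine (hasSum_sum fun j _ => hu _ (hrot j z (hroot w hw))).congr_fun fun n => ?_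
      rw [show ∑ j ∈ range m, c n * (ω ^ j * z) ^ n = c n * z ^ n * ∑ j ∈ range m, (ω ^ j) ^ n by
        rw [mul_sum]; exact sum_congr rfl fun j _ => by ring, hω.sum_pow_pow_eq_ite]
      split_ifs <;> ring
    have hsub := (Function.Injective.hasSum_iff (g := fun l : ℕ => l * m)
      (fun _ _ h => Nat.eq_of_mul_eq_mul_right (Nat.pos_of_ne_zero hm) h)
      fun n hn => if_neg fun hdvd => hn ⟨n / m, Nat.div_mul_cancel hdvd⟩).mpr hfilter
    refine (hsub.mul_left (m : ℂ)⁻¹).congr_fun fun l => ?_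
    have hm' : (m : ℂ) ≠ 0 := Nat.cast_ne_zero.mpr hm
    simp only [Function.comp_apply, if_pos (dvd_mul_left m l), pow_mul', z,
      Complex.cpow_nat_inv_pow w hm, inv_mul_cancel_left₀ hm']
  · rw [norm_mul, norm_inv, Complex.norm_natCast, inv_mul_le_iff₀ (by positivity)]
    refine (norm_sum_le _ _).trans ?_
    simpa using sum_le_sum fun j (_ : j ∈ range m) => hb _ (hrot j _ (hroot w hw))

theorem norm_coeff_le_one_sub_sq (hu : HasPowerSeriesOnUnitDisc c u)
    (hb : ∀ z : ℂ, ‖z‖ < 1 → ‖u z‖ ≤ 1) {m : ℕ} (hm : m ≠ 0) :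
    ‖c m‖ ≤ 1 - ‖c 0‖ ^ 2 := by
  obtain ⟨G, hG, hGb⟩ := hu.exists_coeff_mul_norm_le hb hm
  have hpick := Complex.norm_deriv_le_one_sub_sq hG.differentiableOn fun w hw =>
    mem_closedBall_zero_iff.mpr (hGb w (mem_ball_zero_iff.mp hw))
  simpa [hG.deriv_zero, hG.apply_zero] using hpick

theorem sum_norm_mul_pow_le_one (hu : HasPowerSeriesOnUnitDisc c u)
    (hb : ∀ z : ℂ, ‖z‖ < 1 → ‖u z‖ ≤ 1) {r : ℝ} (hr0 : 0 ≤ r) (hr : r ≤ 1 / 3) (N : ℕ) :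
    ∑ n ∈ range N, ‖c n‖ * r ^ n ≤ 1 := by
  rcases N.eq_zero_or_pos with rfl | hN
  · simp
  set T := ‖c 0‖
  have hT : T ≤ 1 := by simpa [hu.apply_zero] using hb 0 (by simp)
  have hT0 : 0 ≤ 1 - T ^ 2 := by nlinarith [norm_nonneg (c 0)]
  have hgeom : ∑ n ∈ Ico 1 N, r ^ n ≤ 1 / 2 :=
    (geom_sum_Ico_le_of_lt_one hr0 (by linarith)).trans <| by
      rw [pow_one, div_le_iff₀ (by linarith)]; linarith
  calc ∑ n ∈ range N, ‖c n‖ * r ^ n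
      = T + ∑ n ∈ Ico 1 N, ‖c n‖ * r ^ n := by simp [sum_range_eq_add_Ico _ hN, T]
    _ ≤ T + ∑ n ∈ Ico 1 N, (1 - T ^ 2) * r ^ n := by
        gcongr with n hn
        exact hu.norm_coeff_le_one_sub_sq hb (by grind)
    _ ≤ T + (1 - T ^ 2) * (1 / 2) := by rw [← mul_sum]; gcongr
    _ ≤ 1 := by nlinarith [sq_nonneg (1 - T)]

theorem coeff_eq_sum_of_eq_comp {a b : ℕ → ℂ} {f h ψ : ℂ → ℂ}
    (hψd : DifferentiableOn ℂ ψ (ball 0 1)) (hψb : ∀ z : ℂ, ‖z‖ < 1 → ‖ψ z‖ ≤ 1)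
    (hf : HasPowerSeriesOnUnitDisc a f) (hh : HasPowerSeriesOnUnitDisc b h)
    (hsub : ∀ z : ℂ, ‖z‖ < 1 → f z = h (z * ψ z)) {k i : ℕ} (hi : i ≤ k) :
    a i = ∑ n ∈ range (k + 1), b n * shiftCoeff n (taylorCoeff (ψ ^ n)) i := by
  have hφ : ∀ z : ℂ, ‖z‖ < 1 → ‖z * ψ z‖ < 1 := fun z hz => by
    rw [norm_mul]; nlinarith [hψb z hz, norm_nonneg z, norm_nonneg (ψ z)]
  obtain ⟨g, hg, hhg⟩ := hh.exists_eq_sum_add_pow_mul (k + 1)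
  set G := fun z => ψ z ^ (k + 1) * g (z * ψ z)
  have hGd : DifferentiableOn ℂ G (ball 0 1) :=
    (hψd.pow _).mul <| hg.differentiableOn.comp (differentiableOn_id.mul hψd) fun z hz =>
      mem_ball_zero_iff.mpr (hφ z (mem_ball_zero_iff.mp hz))
  have hsplit : HasPowerSeriesOnUnitDisc (fun i => ∑ n ∈ range (k + 1),
      b n * shiftCoeff n (taylorCoeff (ψ ^ n)) i +
        shiftCoeff (k + 1) (taylorCoeff G) i) f := by
    intro z hz
    have := (hasSum_sum fun n (_ : n ∈ range (k + 1)) =>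
      (((hψd.pow n).hasPowerSeriesOnUnitDisc.id_pow_mul n) z hz).mul_left (b n)).add
        ((hGd.hasPowerSeriesOnUnitDisc.id_pow_mul (k + 1)) z hz)
    have hval : f z = ∑ n ∈ range (k + 1), b n * (z ^ n * (ψ ^ n) z) + z ^ (k + 1) * G z := by
      rw [hsub z hz, hhg _ (hφ z hz)]
      congr 1
      · exact sum_congr rfl fun n _ => by rw [Pi.pow_apply, mul_pow]
      · simp only [G]; ring
    rw [hval]
    refine this.congr_fun fun i => ?_
    rw [add_mul, sum_mul]
    simp only [mul_assoc]
  rw [congrFun (hf.unique hsplit) i, shiftCoeff, if_neg (by omega), add_zero]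

end HasPowerSeriesOnUnitDisc

theorem sum_norm_shiftCoeff_taylorCoeff_pow_le {ψ : ℂ → ℂ}
    (hψd : DifferentiableOn ℂ ψ (ball 0 1)) (hψb : ∀ z : ℂ, ‖z‖ < 1 → ‖ψ z‖ ≤ 1)
    {r : ℝ} (hr0 : 0 ≤ r) (hr : r ≤ 1 / 3) (n N : ℕ) :
    ∑ i ∈ range N, ‖shiftCoeff n (taylorCoeff (ψ ^ n)) i‖ * r ^ i ≤ r ^ n := by
  rw [sum_range_norm_shiftCoeff_mul_pow]
  refine mul_le_of_le_one_right (by positivity) <|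
    (hψd.pow n).hasPowerSeriesOnUnitDisc.sum_norm_mul_pow_le_one (fun z hz => ?_) hr0 hr _
  rw [Pi.pow_apply, norm_pow]
  exact pow_le_one₀ (norm_nonneg _) (hψb z hz)

/-- Bohr-type inequality for sections under subordination: if `f ≺ h`, then
`M_r(s_k(f)) ≤ M_r(s_k(h))` for `0 ≤ r ≤ 1/3`. -/
theorem bohr_section_subordination (f h φ : ℂ → ℂ) (a b : ℕ → ℂ)
    (hf : ∀ z : ℂ, ‖z‖ < 1 → HasSum (fun n => a n * z ^ n) (f z))
    (hh : ∀ z : ℂ, ‖z‖ < 1 → HasSum (fun n => b n * z ^ n) (h z))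
    (hφ0 : φ 0 = 0)
    (hφb : ∀ z : ℂ, ‖z‖ < 1 → ‖φ z‖ ≤ 1)
    (hφa : AnalyticOnNhd ℂ φ (Metric.ball (0 : ℂ) 1))
    (hsub : ∀ z : ℂ, ‖z‖ < 1 → f z = h (φ z))
    (k : ℕ) (r : ℝ) (hr0 : 0 ≤ r) (hr : r ≤ 1 / 3) :
    ∑ n ∈ Finset.range (k + 1), ‖a n‖ * r ^ n ≤
      ∑ n ∈ Finset.range (k + 1), ‖b n‖ * r ^ n := by
  obtain ⟨ψ, hψd, hψb, hφψ⟩ :=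
    Complex.exists_eq_mul_of_map_zero hφa.differentiableOn hφ0 hφb
  set D := fun n => shiftCoeff n (taylorCoeff (ψ ^ n))
  have hcoeff : ∀ i ∈ range (k + 1), a i = ∑ n ∈ range (k + 1), b n * D n i := fun i hi =>
    HasPowerSeriesOnUnitDisc.coeff_eq_sum_of_eq_comp hψd hψb hf hh
      (fun z hz => hφψ z ▸ hsub z hz) (Nat.lt_succ_iff.mp (mem_range.mp hi))
  calc ∑ i ∈ range (k + 1), ‖a i‖ * r ^ i
      ≤ ∑ i ∈ range (k + 1), ∑ n ∈ range (k + 1), ‖b n‖ * (‖D n i‖ * r ^ i) := by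
        refine sum_le_sum fun i hi => ?_
        rw [hcoeff i hi]
        refine (mul_le_mul_of_nonneg_right (norm_sum_le _ _) (by positivity)).trans_eq ?_
        simp only [sum_mul, norm_mul, mul_assoc]
    _ = ∑ n ∈ range (k + 1), ‖b n‖ * ∑ i ∈ range (k + 1), ‖D n i‖ * r ^ i := by
        rw [sum_comm]; simp only [mul_sum]
    _ ≤ ∑ n ∈ range (k + 1), ‖b n‖ * r ^ n := by
        gcongr with n
        exact sum_norm_shiftCoeff_taylorCoeff_pow_le hψd hψb hr0 hr n (k + 1)
end
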